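/- Let δ > 0 and let g : (0,δ) → ℝ be continuous and strictly decreasing with lim_{t→0⁺} g(t) = D for some D ∈ ℝ, with inverse g⁻¹. Let γ > 0 and suppose that for every y > 0, lim_{s→0⁺} g⁻¹(D − s y) / g⁻¹(D − s) = y^{γ}. Let M > 1 and for κ ∈ ℕ₀ and u in the image of g define g_{κ,u}(t) := Σ_{i=0}^{κ} ( g(M^i t) − u ). Then for every κ ∈ ℕ₀ and every x > 0, lim_{u→D⁻} g_{κ,u}( x · g⁻¹(u) ) / (D − u) = (κ+1) − ( (1 − M^{(κ+1)/γ}) / (1 − M^{1/γ}) ) · x^{1/γ}. -/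

import Mathlib

/-!
Write `s = D - u → 0⁺`. For `y > 0` the hypothesis on `g⁻¹` gives, eventually,
`g⁻¹(D - s y) < c g⁻¹(u)` when `y ^ γ < c` and the reverse inequality when `y ^ γ > c`;
applying the decreasing `g` turns these into `y < (D - g (c g⁻¹(u))) / s`, resp. its negation.
Hence `(D - g (c g⁻¹(u))) / (D - u) → c ^ (1/γ)` for every `c > 0`, and the claim is the sum of
these limits over `c = Mⁱ x`, a geometric sum in `M ^ (1/γ)`.
-/

open Set Filter Topology

lemma tendsto_const_sub_nhdsLT {D : ℝ} : Tendsto (fun u => D - u) (𝓝[<] D) (𝓝[>] 0) := by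
  refine tendsto_nhdsWithin_iff.2 ⟨?_, ?_⟩
  · have h := (tendsto_const_nhds (x := D)).sub
      ((tendsto_id (x := 𝓝[<] D)).mono_right nhdsWithin_le_nhds)
    rwa [sub_self] at h
  · filter_upwards [self_mem_nhdsWithin] with u (hu : u < D) using sub_pos.2 hu

lemma tendsto_const_sub_sub_mul_nhdsLT {D y : ℝ} (hy : 0 < y) :
    Tendsto (fun u => D - (D - u) * y) (𝓝[<] D) (𝓝[<] D) := by
  refine tendsto_nhdsWithin_iff.2 ⟨?_, ?_⟩
  · have hc : Continuous fun u : ℝ => D - (D - u) * y := by fun_prop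
    simpa using (hc.tendsto D).mono_left nhdsWithin_le_nhds
  · filter_upwards [self_mem_nhdsWithin] with u (hu : u < D)
    exact sub_lt_self D (mul_pos (sub_pos.2 hu) hy)

lemma Real.sum_range_pow_mul_rpow {M p x : ℝ} (hM : 0 < M) (hMp : M ^ p ≠ 1) (hx : 0 ≤ x)
    (n : ℕ) :
    ∑ i ∈ Finset.range n, (M ^ i * x) ^ p = (1 - M ^ (n * p)) / (1 - M ^ p) * x ^ p := by
  have hpow (k : ℕ) : (M ^ k) ^ p = (M ^ p) ^ k := by
    rw [← Real.rpow_natCast, ← Real.rpow_mul hM.le, mul_comm, Real.rpow_mul hM.le,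
      Real.rpow_natCast]
  simp only [Real.mul_rpow (pow_nonneg hM.le _) hx, hpow, ← Finset.sum_mul]
  rw [geom_sum_eq hMp, ← neg_div_neg_eq, neg_sub, neg_sub, mul_comm (n : ℝ), Real.rpow_mul hM.le,
    Real.rpow_natCast]

section DecreasingObservable

variable {δ D : ℝ} {g ginv : ℝ → ℝ}

lemma StrictAntiOn.lt_of_tendsto_nhdsGT (hga : StrictAntiOn g (Ioo 0 δ))
    (hL : Tendsto g (𝓝[>] 0) (𝓝 D)) {t : ℝ} (ht : t ∈ Ioo 0 δ) : g t < D := by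
  have ht2 : t / 2 ∈ Ioo 0 δ := ⟨half_pos ht.1, (half_lt_self ht.1).trans ht.2⟩
  have hle : g (t / 2) ≤ D := ge_of_tendsto hL <| by
    filter_upwards [Ioo_mem_nhdsGT ht2.1] with s hs
    exact (hga ⟨hs.1, hs.2.trans ht2.2⟩ ht2 hs.2).le
  exact (hga ht2 ht (half_lt_self ht.1)).trans_le hle

lemma exists_mem_Ioo_eq_of_tendsto_nhdsGT (hgc : ContinuousOn g (Ioo 0 δ))
    (hL : Tendsto g (𝓝[>] 0) (𝓝 D)) {ε v : ℝ} (hε : ε ∈ Ioo 0 δ) (hv : v ∈ Ioo (g ε) D) :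
    ∃ t ∈ Ioo 0 ε, g t = v := by
  obtain ⟨s, hvs, hs⟩ :=
    ((hL.eventually (eventually_gt_nhds hv.2)).and (Ioo_mem_nhdsGT hε.1)).exists
  have hsub : Icc s ε ⊆ Ioo 0 δ := fun z hz => ⟨hs.1.trans_le hz.1, hz.2.trans_lt hε.2⟩
  obtain ⟨t, ht, rfl⟩ := intermediate_value_Ioo' hs.2.le (hgc.mono hsub) ⟨hv.1, hvs⟩
  exact ⟨t, ⟨hs.1.trans ht.1, ht.2⟩, rfl⟩

lemma eventually_ginv_mem_Ioo_and_rightInverse (hgc : ContinuousOn g (Ioo 0 δ))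
    (hga : StrictAntiOn g (Ioo 0 δ)) (hL : Tendsto g (𝓝[>] 0) (𝓝 D))
    (hginv : ∀ t ∈ Ioo 0 δ, ginv (g t) = t) {ε : ℝ} (hε : ε ∈ Ioo 0 δ) :
    ∀ᶠ v in 𝓝[<] D, ginv v ∈ Ioo 0 ε ∧ g (ginv v) = v := by
  filter_upwards [Ioo_mem_nhdsLT (hga.lt_of_tendsto_nhdsGT hL hε)] with v hv
  obtain ⟨t, ht, rfl⟩ := exists_mem_Ioo_eq_of_tendsto_nhdsGT hgc hL hε hv
  rw [hginv t ⟨ht.1, ht.2.trans hε.2⟩]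
  exact ⟨ht, rfl⟩

lemma tendsto_ginv_nhdsGT (hδ : 0 < δ) (hgc : ContinuousOn g (Ioo 0 δ))
    (hga : StrictAntiOn g (Ioo 0 δ)) (hL : Tendsto g (𝓝[>] 0) (𝓝 D))
    (hginv : ∀ t ∈ Ioo 0 δ, ginv (g t) = t) : Tendsto ginv (𝓝[<] D) (𝓝[>] 0) := by
  have hδ2 : δ / 2 ∈ Ioo 0 δ := ⟨half_pos hδ, half_lt_self hδ⟩
  have hmem := eventually_ginv_mem_Ioo_and_rightInverse hgc hga hL hginv hδ2
  refine tendsto_nhdsWithin_iff.2 ⟨tendsto_order.2 ⟨fun a ha => ?_, fun b hb => ?_⟩, ?_⟩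
  · filter_upwards [hmem] with v hv using ha.trans hv.1.1
  · have hε : min b (δ / 2) ∈ Ioo 0 δ :=
      ⟨lt_min hb hδ2.1, (min_le_right _ _).trans_lt hδ2.2⟩
    filter_upwards [eventually_ginv_mem_Ioo_and_rightInverse hgc hga hL hginv hε] with v hv
    exact hv.1.2.trans_le (min_le_left _ _)
  · filter_upwards [hmem] with v hv using hv.1.1

lemma eventually_ginv_lt_mul_iff (hδ : 0 < δ) (hgc : ContinuousOn g (Ioo 0 δ))
    (hga : StrictAntiOn g (Ioo 0 δ)) (hL : Tendsto g (𝓝[>] 0) (𝓝 D))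
    (hginv : ∀ t ∈ Ioo 0 δ, ginv (g t) = t) {c y : ℝ} (hc : 0 < c) (hy : 0 < y) :
    ∀ᶠ u in 𝓝[<] D,
      (ginv (D - (D - u) * y) < c * ginv u ↔ y < (D - g (c * ginv u)) / (D - u)) := by
  have hδ2 : δ / 2 ∈ Ioo 0 δ := ⟨half_pos hδ, half_lt_self hδ⟩
  filter_upwards [self_mem_nhdsWithin,
    (tendsto_const_sub_sub_mul_nhdsLT hy).eventually
      (eventually_ginv_mem_Ioo_and_rightInverse hgc hga hL hginv hδ2),
    (tendsto_ginv_nhdsGT hδ hgc hga hL hginv).eventually (Ioo_mem_nhdsGT (div_pos hδ hc))]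
    with u (hu : u < D) ⟨hw, hgw⟩ hv
  have hcv : c * ginv u ∈ Ioo 0 δ :=
    ⟨mul_pos hc hv.1, by rw [← lt_div_iff₀' hc]; exact hv.2⟩
  rw [← hga.lt_iff_gt hcv (Ioo_subset_Ioo_right hδ2.2.le hw), hgw, lt_div_iff₀ (sub_pos.2 hu)]
  constructor <;> intro h <;> linarith

lemma tendsto_sub_apply_mul_ginv_div_sub (hδ : 0 < δ) (hgc : ContinuousOn g (Ioo 0 δ))
    (hga : StrictAntiOn g (Ioo 0 δ)) (hL : Tendsto g (𝓝[>] 0) (𝓝 D))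
    (hginv : ∀ t ∈ Ioo 0 δ, ginv (g t) = t) {γ : ℝ} (hγ : 0 < γ)
    (hlim : ∀ y : ℝ, 0 < y →
      Tendsto (fun s => ginv (D - s * y) / ginv (D - s)) (𝓝[>] 0) (𝓝 (y ^ γ)))
    {c : ℝ} (hc : 0 < c) :
    Tendsto (fun u => (D - g (c * ginv u)) / (D - u)) (𝓝[<] D) (𝓝 (c ^ (1 / γ))) := by
  have hratio (y : ℝ) (hy : 0 < y) :
      Tendsto (fun u => ginv (D - (D - u) * y) / ginv u) (𝓝[<] D) (𝓝 (y ^ γ)) := by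
    simpa only [Function.comp_def, sub_sub_cancel] using
      (hlim y hy).comp (tendsto_const_sub_nhdsLT (D := D))
  have hpos : ∀ᶠ u in 𝓝[<] D, 0 < ginv u :=
    (tendsto_ginv_nhdsGT hδ hgc hga hL hginv).eventually self_mem_nhdsWithin
  rw [one_div]
  refine tendsto_order.2 ⟨fun a ha => ?_, fun b hb => ?_⟩
  · obtain ⟨y, hay, hyc⟩ := exists_between (max_lt ha (by positivity : 0 < c ^ γ⁻¹))
    have hy : 0 < y := (le_max_right a 0).trans_lt hay
    have hyγ : y ^ γ < c := (Real.lt_rpow_inv_iff_of_pos hy.le hc.le hγ).1 hyc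
    filter_upwards [(hratio y hy).eventually (eventually_lt_nhds hyγ), hpos,
      eventually_ginv_lt_mul_iff hδ hgc hga hL hginv hc hy] with u hlt hu hiff
    exact ((le_max_left a 0).trans_lt hay).trans (hiff.1 ((div_lt_iff₀ hu).1 hlt))
  · obtain ⟨y, hcy, hyb⟩ := exists_between hb
    have hy : 0 < y := (by positivity : 0 < c ^ γ⁻¹).trans hcy
    have hγy : c < y ^ γ := (Real.rpow_inv_lt_iff_of_pos hc.le hy.le hγ).1 hcy
    filter_upwards [(hratio y hy).eventually (eventually_gt_nhds hγy), hpos,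
      eventually_ginv_lt_mul_iff hδ hgc hga hL hginv hc hy] with u hgt hu hiff
    exact (not_lt.1 (mt hiff.2 ((lt_div_iff₀ hu).1 hgt).not_gt)).trans_lt hyb

end DecreasingObservable

/-- Type 3 computation in the AOT analysis: with
`g_{κ,u}(t) = Σ_{i=0}^{κ}(g(Mⁱt) − u)`, one has
`g_{κ,u}(x·g⁻¹(u))/(D − u) → (κ+1) − ((1 − M^{(κ+1)/γ})/(1 − M^{1/γ}))·x^{1/γ}`
as `u → D⁻`. -/
theorem statement15 (δ : ℝ) (hδ : 0 < δ) (g ginv : ℝ → ℝ)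
    (hgc : ContinuousOn g (Ioo 0 δ)) (hga : StrictAntiOn g (Ioo 0 δ))
    (D : ℝ) (hL : Tendsto g (nhdsWithin 0 (Ioi 0)) (nhds D))
    (hginv : ∀ t ∈ Ioo 0 δ, ginv (g t) = t)
    (γ : ℝ) (hγ : 0 < γ)
    (hlim : ∀ y : ℝ, 0 < y →
      Tendsto (fun s => ginv (D - s * y) / ginv (D - s)) (nhdsWithin 0 (Ioi 0))
        (nhds (y ^ γ)))
    (M : ℝ) (hM : 1 < M)
    (gk : ℕ → ℝ → ℝ → ℝ)
    (hgk : ∀ (κ : ℕ) (u t : ℝ), gk κ u t = ∑ i ∈ Finset.range (κ + 1), (g (M ^ i * t) - u)) :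
    ∀ (κ : ℕ) (x : ℝ), 0 < x →
      Tendsto (fun u => gk κ u (x * ginv u) / (D - u)) (nhdsWithin D (Iio D))
        (nhds (((κ : ℝ) + 1) -
          (1 - M ^ (((κ : ℝ) + 1) / γ)) / (1 - M ^ (1 / γ)) * x ^ (1 / γ))) := by
  intro κ x hx
  have hterm (i : ℕ) : Tendsto (fun u => 1 - (D - g (M ^ i * x * ginv u)) / (D - u)) (𝓝[<] D)
      (𝓝 (1 - (M ^ i * x) ^ (1 / γ))) :=
    tendsto_const_nhds.sub
      (tendsto_sub_apply_mul_ginv_div_sub hδ hgc hga hL hginv hγ hlim (by positivity))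
  have hsum := tendsto_finsetSum (Finset.range (κ + 1)) fun i _ => hterm i
  have hMγ : M ^ (1 / γ) ≠ 1 := (Real.one_lt_rpow hM (by positivity)).ne'
  rw [Finset.sum_sub_distrib, Finset.sum_const, Finset.card_range, nsmul_one,
    Real.sum_range_pow_mul_rpow (by positivity) hMγ hx.le, Nat.cast_add_one, mul_one_div] at hsum
  refine hsum.congr' ?_
  filter_upwards [self_mem_nhdsWithin] with u (hu : u < D)
  rw [hgk, Finset.sum_div]
  refine Finset.sum_congr rfl fun i _ => ?_
  field_simp [sub_ne_zero.2 hu.ne']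
  ring
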